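/- For r ≥ 2 and j ≥ 1 with r not dividing j, V_{r,j,n} = Σ_{k ≥ 0} W_{r, r^k j, n}, where V_{r,j,n} is the total multiplicity of the part j over all r-class regular partitions of n, and W_{r,j,n} = Σ_{ρ ∈ CP_{r,n}} #{i : m_i(ρ) ≥ j}. -/

import Mathlib

open Nat Finset
open scoped Classical

/-- The set of `r`-class regular partitions of `n`: no part divisible by `r`. -/
noncomputable def CP (r n : ℕ) : Finset (n.Partition) :=
  Finset.univ.filter (fun l => ∀ p ∈ l.parts, ¬ r ∣ p)

/-- The number of part-sizes `i` whose multiplicity in `ρ` is at least `j` (for `j ≥ 1`). -/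
noncomputable def numGE {n : ℕ} (ρ : n.Partition) (j : ℕ) : ℕ :=
  (ρ.parts.toFinset.filter (fun i => j ≤ ρ.parts.count i)).card

/-- `V r j n = Σ_{ρ ∈ CP_{r,n}} m_j(ρ)`. -/
noncomputable def V (r j n : ℕ) : ℕ := ∑ ρ ∈ CP r n, ρ.parts.count j

/-- `W r j n = Σ_{ρ ∈ CP_{r,n}} #{i : m_i(ρ) ≥ j}`. -/
noncomputable def W (r j n : ℕ) : ℕ := ∑ ρ ∈ CP r n, numGE ρ j

/-!
Both sides count partitions in `CP r (n - m)` for suitable `m`. Removing `c` copies of a part `i`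
with `r ∤ i` shows that the number of `ρ ∈ CP r n` with `m_i(ρ) ≥ c` is `|CP r (n - i c)|`, a
quantity depending on `i c` only. Double counting then gives
`V r j n = ∑_{c ≥ 1} |CP r (n - j c)|` and `W r J n = ∑_{r ∤ i} |CP r (n - i J)|`, so
`∑_k W r (r^k j) n = ∑_{k, r ∤ i} |CP r (n - j r^k i)|`, and the theorem follows because every
`c ≥ 1` is uniquely of the form `r^k i` with `r ∤ i`.
-/

theorem multiplicity_pow_mul_of_not_dvd {α : Type*} [CommMonoidWithZero α] [IsCancelMulZero α]
    {a b : α} (ha : a ≠ 0) (hb : ¬ a ∣ b) (k : ℕ) : multiplicity a (a ^ k * b) = k := by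
  refine multiplicity_eq_of_dvd_of_not_dvd (dvd_mul_right _ _) fun h => hb ?_
  rwa [pow_succ, mul_dvd_mul_iff_left (pow_ne_zero k ha)] at h

theorem Finset.sum_Icc_eq_sum_range_sum_pow_mul {M : Type*} [AddCommMonoid M] {r : ℕ}
    (hr : 1 < r) (n : ℕ) (f : ℕ → M) (hf : ∀ m, n < m → f m = 0) :
    ∑ m ∈ Icc 1 n, f m = ∑ k ∈ range n, ∑ i ∈ Icc 1 n with ¬ r ∣ i, f (r ^ k * i) := by
  rw [← sum_product']
  refine (sum_bij_ne_zero (fun p _ _ => r ^ p.1 * p.2) ?_ ?_ ?_ fun _ _ _ => rfl).symm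
  · rintro ⟨k, i⟩ hp hf0
    simp only [mem_product, mem_filter, mem_Icc] at hp
    exact mem_Icc.2 ⟨Nat.mul_pos (Nat.pow_pos (by omega)) hp.2.1.1, not_lt.1 fun h => hf0 (hf _ h)⟩
  · rintro ⟨k, i⟩ hp - ⟨l, i'⟩ hp' - h
    simp only [mem_product, mem_filter] at hp hp'
    have hkl : k = l := by
      simpa only [multiplicity_pow_mul_of_not_dvd (by omega : r ≠ 0) hp.2.2,
        multiplicity_pow_mul_of_not_dvd (by omega : r ≠ 0) hp'.2.2] using
        congrArg (multiplicity r) h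
    subst hkl
    simpa using Nat.eq_of_mul_eq_mul_left (Nat.pow_pos (by omega : 0 < r)) h
  · intro m hm _
    rw [mem_Icc] at hm
    obtain ⟨k, i, hi, rfl⟩ := Nat.exists_eq_pow_mul_and_not_dvd (by omega : m ≠ 0) r (by omega)
    have hi0 : 0 < i := Nat.pos_of_ne_zero fun h => hi (h ▸ dvd_zero r)
    have hk : k < r ^ k * i := (Nat.lt_pow_self hr).trans_le (Nat.le_mul_of_pos_right _ hi0)
    have hi_le : i ≤ r ^ k * i := Nat.le_mul_of_pos_left _ (Nat.pow_pos (by omega))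
    exact ⟨(k, i), by simp only [mem_product, mem_range, mem_filter, mem_Icc]; omega, ‹_›, rfl⟩

theorem Nat.Partition.mul_count_le {n : ℕ} (ρ : n.Partition) (i : ℕ) :
    i * ρ.parts.count i ≤ n := by
  obtain ⟨u, hu⟩ := Multiset.le_iff_exists_add.mp
    (Multiset.le_count_iff_replicate_le.mp le_rfl : Multiset.replicate (ρ.parts.count i) i ≤ _)
  have := congrArg Multiset.sum hu
  rw [ρ.parts_sum, Multiset.sum_add, Multiset.sum_replicate, smul_eq_mul] at this
  rw [mul_comm]
  omega

noncomputable def cpCountGE (r n i c : ℕ) : ℕ := #{ρ ∈ CP r n | c ≤ ρ.parts.count i}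

section cpCountGE

variable {r n i c : ℕ}

theorem mem_CP {ρ : n.Partition} : ρ ∈ CP r n ↔ ∀ p ∈ ρ.parts, ¬ r ∣ p := by
  simp [CP]

theorem cpCountGE_zero : cpCountGE r n i 0 = #(CP r n) := by
  simp [cpCountGE]

theorem cpCountGE_succ (hi : ¬ r ∣ i) (hin : i ≤ n) :
    cpCountGE r n i (c + 1) = cpCountGE r (n - i) i c := by
  have hi0 : 1 ≤ i := Nat.pos_of_ne_zero fun h => hi (h ▸ dvd_zero r)
  set e := Nat.Partition.partitionWithPartEquiv hi0 hin
  have hmem {ρ : n.Partition} (h : ρ ∈ {ρ ∈ CP r n | c + 1 ≤ ρ.parts.count i}) : i ∈ ρ.parts :=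
    Multiset.count_pos.mp (by simp only [mem_filter] at h; omega)
  refine card_bij' (fun ρ h => e ⟨ρ, hmem h⟩) (fun σ _ => (e.symm σ).1) ?_ ?_
    (fun ρ h => by simp) (fun σ _ => by simp)
  · intro ρ h
    simp only [mem_filter, mem_CP, e, Nat.Partition.partitionWithPartEquiv_apply_parts,
      Multiset.count_erase_self] at h ⊢
    exact ⟨fun p hp => h.1 p (Multiset.mem_of_mem_erase hp), by omega⟩
  · intro σ h
    simp only [mem_filter, mem_CP, e, Nat.Partition.partitionWithPartEquiv_symm_apply_parts,
      Multiset.mem_cons, Multiset.count_cons_self, forall_eq_or_imp] at h ⊢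
    exact ⟨⟨hi, h.1⟩, by omega⟩

theorem cpCountGE_eq_card_CP (hi : ¬ r ∣ i) (h : i * c ≤ n) :
    cpCountGE r n i c = #(CP r (n - i * c)) := by
  induction c generalizing n with
  | zero => simp [cpCountGE_zero]
  | succ c ih =>
    rw [cpCountGE_succ hi (le_trans (Nat.le_mul_of_pos_right i c.succ_pos) h),
      ih (by rw [mul_succ] at h; omega), mul_succ, Nat.sub_sub, add_comm i]

theorem cpCountGE_eq_zero_of_lt (h : n < i * c) : cpCountGE r n i c = 0 := by
  refine card_eq_zero.2 (filter_eq_empty_iff.2 fun ρ _ hc => ?_)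
  have := (Nat.mul_le_mul_left i hc).trans (ρ.mul_count_le i)
  omega

theorem cpCountGE_eq_zero_of_dvd (hc : c ≠ 0) (hi : r ∣ i) : cpCountGE r n i c = 0 := by
  refine card_eq_zero.2 (filter_eq_empty_iff.2 fun ρ hρ hcount => ?_)
  exact mem_CP.1 hρ i (Multiset.count_pos.1 (by omega)) hi

theorem cpCountGE_eq_of_mul_eq {i' c' : ℕ} (hi : ¬ r ∣ i) (hi' : ¬ r ∣ i') (h : i * c = i' * c') :
    cpCountGE r n i c = cpCountGE r n i' c' := by
  by_cases hn : i * c ≤ n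
  · rw [cpCountGE_eq_card_CP hi hn, cpCountGE_eq_card_CP hi' (h ▸ hn), h]
  · rw [cpCountGE_eq_zero_of_lt (by omega), cpCountGE_eq_zero_of_lt (by omega)]

end cpCountGE

section DoubleCounting

variable {r n : ℕ}

theorem V_eq_sum_cpCountGE {j : ℕ} (hj : j ≠ 0) : V r j n = ∑ c ∈ Icc 1 n, cpCountGE r n j c := by
  have hcount (ρ : n.Partition) :
      ρ.parts.count j = #(bipartiteAbove (fun ρ c => c ≤ ρ.parts.count j) (Icc 1 n) ρ) := by
    have := (Nat.le_mul_of_pos_left (ρ.parts.count j) (Nat.pos_of_ne_zero hj)).trans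
      (ρ.mul_count_le j)
    rw [bipartiteAbove, show {c ∈ Icc 1 n | c ≤ ρ.parts.count j} = Icc 1 (ρ.parts.count j) by
      ext; simp only [mem_filter, mem_Icc]; omega, Nat.card_Icc, add_tsub_cancel_right]
  rw [V, sum_congr rfl fun ρ _ => hcount ρ, sum_card_bipartiteAbove_eq_sum_card_bipartiteBelow]
  rfl

theorem W_eq_sum_cpCountGE {J : ℕ} (hJ : J ≠ 0) :
    W r J n = ∑ i ∈ Icc 1 n with ¬ r ∣ i, cpCountGE r n i J := by
  have hnumGE (ρ : n.Partition) :
      numGE ρ J = #(bipartiteAbove (fun ρ i => J ≤ ρ.parts.count i) (Icc 1 n) ρ) := by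
    rw [numGE, bipartiteAbove]
    congr 1
    ext i
    simp only [mem_filter, Multiset.mem_toFinset, mem_Icc]
    constructor
    · rintro ⟨hmem, hcount⟩
      exact ⟨⟨ρ.parts_pos hmem, ρ.le_of_mem_parts hmem⟩, hcount⟩
    · rintro ⟨-, hcount⟩
      exact ⟨Multiset.count_pos.mp (by omega), hcount⟩
  rw [sum_filter_of_ne (p := fun i => ¬ r ∣ i) fun i _ h hi =>
    h (cpCountGE_eq_zero_of_dvd hJ hi), W, sum_congr rfl fun ρ _ => hnumGE ρ, sum_card_bipartiteAbove_eq_sum_card_bipartiteBelow]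
  rfl

end DoubleCounting

theorem V_eq_tsum_W_general (r j n : ℕ) (hr : 2 ≤ r) (hjr : ¬ r ∣ j) :
    V r j n = ∑' k : ℕ, W r (r ^ k * j) n := by
  have hj : j ≠ 0 := fun h => hjr (h ▸ dvd_zero r)
  have hvanish (m : ℕ) (hm : n < m) : cpCountGE r n j m = 0 :=
    cpCountGE_eq_zero_of_lt (hm.trans_le (Nat.le_mul_of_pos_left m (Nat.pos_of_ne_zero hj)))
  have hW (k : ℕ) :
      W r (r ^ k * j) n = ∑ i ∈ Icc 1 n with ¬ r ∣ i, cpCountGE r n j (r ^ k * i) := by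
    rw [W_eq_sum_cpCountGE (by positivity)]
    exact sum_congr rfl fun i hi => cpCountGE_eq_of_mul_eq (mem_filter.1 hi).2 hjr (by ring)
  simp_rw [hW]
  rw [V_eq_sum_cpCountGE hj, sum_Icc_eq_sum_range_sum_pow_mul hr n _ hvanish]
  refine (tsum_eq_sum fun k hk => sum_eq_zero fun i hi => hvanish _ ?_).symm
  simp only [mem_range, not_lt, mem_filter, mem_Icc] at hk hi
  calc n ≤ k := hk
    _ < r ^ k := Nat.lt_pow_self hr
    _ ≤ r ^ k * i := Nat.le_mul_of_pos_right _ hi.1.1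

theorem V_eq_tsum_W (r j n : ℕ) (hr : 2 ≤ r) (hj : 1 ≤ j) (hjr : ¬ r ∣ j) :
    V r j n = ∑' k : ℕ, W r (r ^ k * j) n :=
  V_eq_tsum_W_general r j n hr hjr
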